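/- For any subset P of 𝔽₂ⁿ (n ≥ 1) containing 0 with P ≠ 𝔽₂ⁿ, there exists a nonzero z ∈ 𝔽₂ⁿ such that |{x ∈ P : (x,z) = 0}| > |{x ∈ P : (x,z) = 1}|, i.e., some hyperplane through the origin contains strictly more than half of the elements of P. -/
import Mathlib


open Finset

private lemma zmod2_ne_zero {a : ZMod 2} (h : a ≠ 0) : a = 1 := by
  revert h; revert a; decide

private lemma card_pair_eq (n : ℕ) (x : Fin n → ZMod 2) (hx : x ≠ 0) :
    ((univ : Finset (Fin n → ZMod 2)).filter (fun z => (∑ i, x i * z i) = 0)).card =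
    ((univ : Finset (Fin n → ZMod 2)).filter (fun z => (∑ i, x i * z i) = 1)).card := by
  obtain ⟨i, hi⟩ : ∃ i, x i ≠ 0 := by
    by_contra h; push_neg at h; exact hx (funext h)
  have hxi : x i = 1 := zmod2_ne_zero hi
  set e : Fin n → ZMod 2 := Pi.single i 1 with he
  have hsum : ∀ z : Fin n → ZMod 2,
      (∑ j, x j * (z + e) j) = (∑ j, x j * z j) + 1 := by
    intro z
    have h1 : ∀ j, x j * (z + e) j = x j * z j + (if j = i then x j else 0) := by
      intro j
      simp [he, Pi.single_apply, mul_add, mul_ite]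
    rw [Finset.sum_congr rfl fun j _ => h1 j, Finset.sum_add_distrib,
      Finset.sum_ite_eq' univ i (fun j => x j)]
    simp [hxi]
  have hinv : ∀ z : Fin n → ZMod 2, (z + e) + e = z := by
    intro z
    rw [add_assoc]
    have h2 : e + e = 0 := by
      funext j; simp only [he, Pi.add_apply, Pi.zero_apply, Pi.single_apply]
      split <;> decide
    rw [h2, add_zero]
  have hiff : ∀ s : ZMod 2, s = 0 ↔ s + 1 = 1 := by decide
  refine Finset.card_bij' (fun z _ => z + e) (fun z _ => z + e) ?_ ?_ ?_ ?_
  · intro z hz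
    simp only [mem_filter, mem_univ, true_and] at hz ⊢
    rw [hsum z, ← hiff, hz]
  · intro z hz
    simp only [mem_filter, mem_univ, true_and] at hz ⊢
    rw [hiff, hsum z, hz]
    decide
  · intro z _; exact hinv z
  · intro z _; exact hinv z

/-- For a proper subset `P` of `𝔽₂ⁿ` containing `0`, some hyperplane through the origin
contains strictly more elements of `P` than its complement does. -/
theorem exists_majority_hyperplane (n : ℕ) (hn : 1 ≤ n) (P : Finset (Fin n → ZMod 2))
    (h0 : (0 : Fin n → ZMod 2) ∈ P) (hP : P ≠ Finset.univ) :
    ∃ z : Fin n → ZMod 2, z ≠ 0 ∧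
      (P.filter (fun x => (∑ i, x i * z i) = 0)).card >
        (P.filter (fun x => (∑ i, x i * z i) = 1)).card := by
  by_contra hcon
  push_neg at hcon
  set ε : (Fin n → ZMod 2) → (Fin n → ZMod 2) → ℤ :=
    fun x z => if (∑ i, x i * z i) = 0 then 1 else -1 with hε
  have hg : ∀ z : Fin n → ZMod 2, (∑ x ∈ P, ε x z) =
      ((P.filter (fun x => (∑ i, x i * z i) = 0)).card : ℤ) -
      ((P.filter (fun x => (∑ i, x i * z i) = 1)).card : ℤ) := by
    intro z
    rw [hε]
    rw [Finset.sum_ite, Finset.sum_const, Finset.sum_const]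
    have h3 : P.filter (fun x => ¬ (∑ i, x i * z i) = 0) =
        P.filter (fun x => (∑ i, x i * z i) = 1) := by
      apply Finset.filter_congr
      intro x _
      constructor
      · intro h; exact zmod2_ne_zero h
      · intro h h0'; rw [h0'] at h; exact one_ne_zero h.symm
    rw [h3]
    push_cast
    ring
  have hinner : ∀ x : Fin n → ZMod 2, x ∈ P →
      (∑ z : Fin n → ZMod 2, ε x z) = if x = 0 then (2 ^ n : ℤ) else 0 := by
    intro x _
    by_cases hx : x = 0
    · subst hx
      simp only [if_pos rfl]
      have h4 : ∀ z : Fin n → ZMod 2, ε 0 z = 1 := by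
        intro z; simp [hε]
      rw [Finset.sum_congr rfl fun z _ => h4 z, Finset.sum_const]
      simp [Fintype.card_fun]
    · rw [if_neg hx, hε]
      rw [Finset.sum_ite, Finset.sum_const, Finset.sum_const]
      have heq : ((univ : Finset (Fin n → ZMod 2)).filter
            (fun z => ¬ (∑ i, x i * z i) = 0)) =
          ((univ : Finset (Fin n → ZMod 2)).filter (fun z => (∑ i, x i * z i) = 1)) := by
        apply Finset.filter_congr
        intro z _
        constructor
        · intro h; exact zmod2_ne_zero h
        · intro h h0'; rw [h0'] at h; exact one_ne_zero h.symm
      rw [heq, card_pair_eq n x hx]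
      push_cast; ring
  have htotal : (∑ z : Fin n → ZMod 2, ∑ x ∈ P, ε x z) = 2 ^ n := by
    rw [Finset.sum_comm]
    rw [Finset.sum_congr rfl hinner]
    simp [Finset.sum_ite_eq' P (0 : Fin n → ZMod 2), h0]
  have hz0 : (∑ x ∈ P, ε x 0) = (P.card : ℤ) := by
    rw [hg]
    have h1 : P.filter (fun x => (∑ i, x i * (0 : Fin n → ZMod 2) i) = 0) = P := by
      apply Finset.filter_true_of_mem; intro x _; simp
    have h2 : P.filter (fun x => (∑ i, x i * (0 : Fin n → ZMod 2) i) = 1) = ∅ := by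
      apply Finset.filter_false_of_mem; intro x _; simp
    rw [h1, h2]; simp
  have hle : (∑ z : Fin n → ZMod 2, ∑ x ∈ P, ε x z) ≤ (P.card : ℤ) := by
    rw [← Finset.add_sum_erase _ _ (Finset.mem_univ (0 : Fin n → ZMod 2)), hz0]
    have h5 : (∑ z ∈ univ.erase (0 : Fin n → ZMod 2), ∑ x ∈ P, ε x z) ≤ 0 := by
      apply Finset.sum_nonpos
      intro z hz
      rw [hg z]
      have hzne : z ≠ 0 := (Finset.mem_erase.mp hz).1
      have := hcon z hzne
      have hc' : ((P.filter (fun x => (∑ i, x i * z i) = 0)).card : ℤ) ≤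
          ((P.filter (fun x => (∑ i, x i * z i) = 1)).card : ℤ) := by exact_mod_cast this
      linarith
    linarith
  have hcard : P.card < 2 ^ n := by
    have := Finset.card_lt_card (Finset.ssubset_univ_iff.mpr hP)
    simpa [Fintype.card_fun] using this
  rw [htotal] at hle
  have hcast : ((2 : ℤ) ^ n) = ((2 ^ n : ℕ) : ℤ) := by push_cast; ring
  rw [hcast] at hle
  omega
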